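/- With the linear feedback alignment updates W(t+1) = W(t) - (η/√p) b e(t)ᵀ X and β(t+1) = (1-ηλ(t)) β(t) - (η/√p) W(t) Xᵀ e(t), the error e(t) = (1/√p) X W(t)ᵀ β(t) - y satisfies the one-step recursion e(t+1) = (1-ηλ(t)) e(t) - (η/p) (bᵀ β(t+1)) X Xᵀ e(t) - (η/p) X W(t)ᵀ W(t) Xᵀ e(t) - ηλ(t) y. -/

import Mathlib

open Matrix

/-- **One-step error recursion for regularized linear feedback alignment.**
With updates `W(t+1) = W(t) - (η/√p) b e(t)ᵀ X` and
`β(t+1) = (1-ηλ(t)) β(t) - (η/√p) W(t) Xᵀ e(t)`, the error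
`e(t) = (1/√p) X W(t)ᵀ β(t) - y` satisfies
`e(t+1) = (1-ηλ(t)) e(t) - (η/p) (bᵀ β(t+1)) X Xᵀ e(t)
          - (η/p) X W(t)ᵀ W(t) Xᵀ e(t) - ηλ(t) y`. -/
theorem linear_fa_error_recursion (n d p : ℕ) (η : ℝ)
    (X : Matrix (Fin n) (Fin d) ℝ) (y : Fin n → ℝ) (b : Fin p → ℝ)
    (lam : ℕ → ℝ)
    (W : ℕ → Matrix (Fin p) (Fin d) ℝ) (β : ℕ → Fin p → ℝ) (e : ℕ → Fin n → ℝ)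
    (he : ∀ t, e t = (1 / Real.sqrt p) • (X *ᵥ ((W t)ᵀ *ᵥ β t)) - y)
    (hW : ∀ t, W (t + 1) = W t - (η / Real.sqrt p) • (Matrix.vecMulVec b (e t) * X))
    (hβ : ∀ t, β (t + 1) =
      (1 - η * lam t) • β t - (η / Real.sqrt p) • (W t *ᵥ (Xᵀ *ᵥ e t))) :
    ∀ t : ℕ,
      e (t + 1) = (1 - η * lam t) • e t
        - ((η / p) * (b ⬝ᵥ β (t + 1))) • ((X * Xᵀ) *ᵥ e t)
        - (η / p) • (X *ᵥ ((W t)ᵀ *ᵥ (W t *ᵥ (Xᵀ *ᵥ e t))))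
        - (η * lam t) • y := by
  intro t
  have hp : Real.sqrt p * Real.sqrt p = p := Real.mul_self_sqrt (Nat.cast_nonneg p)
  have hvmv : ∀ (v : Fin p → ℝ), Matrix.vecMulVec (e t) b *ᵥ v = (b ⬝ᵥ v) • e t := by
    intro v
    ext i
    simp only [Matrix.mulVec, Matrix.vecMulVec, dotProduct, Pi.smul_apply,
      smul_eq_mul, Matrix.of_apply, Finset.sum_mul]
    exact Finset.sum_congr rfl fun _ _ => by ring
  have htr : (Matrix.vecMulVec b (e t) * X)ᵀ = Xᵀ * Matrix.vecMulVec (e t) b := by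
    rw [Matrix.transpose_mul]
    congr 1
    ext i j
    simp [Matrix.vecMulVec, mul_comm]
  have key : (W (t+1))ᵀ *ᵥ β (t+1)
      = (1 - η * lam t) • ((W t)ᵀ *ᵥ β t)
        - (η / Real.sqrt p) • ((W t)ᵀ *ᵥ (W t *ᵥ (Xᵀ *ᵥ e t)))
        - ((η / Real.sqrt p) * (b ⬝ᵥ β (t+1))) • (Xᵀ *ᵥ (e t)) := by
    rw [hW t, Matrix.transpose_sub, Matrix.transpose_smul, htr, Matrix.sub_mulVec,
      Matrix.smul_mulVec, ← Matrix.mulVec_mulVec, hvmv, Matrix.mulVec_smul]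
    nth_rewrite 1 [hβ t]
    rw [Matrix.mulVec_sub, Matrix.mulVec_smul, Matrix.mulVec_smul]
    module
  have hxx : (X * Xᵀ) *ᵥ e t = X *ᵥ (Xᵀ *ᵥ e t) := by rw [← Matrix.mulVec_mulVec]
  have he1 := he (t+1)
  rw [key] at he1
  rw [he1, hxx]
  generalize Xᵀ *ᵥ e t = v at *
  rw [he t]
  simp only [Matrix.mulVec_sub, Matrix.mulVec_smul]
  match_scalars <;> field_simp <;> simp only [Real.sq_sqrt (Nat.cast_nonneg p), neg_sub] <;> ring
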